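/- arXiv:1112.1504 — 2 statements merged into one kernel-verified Lean document; each statement's English description precedes it below -/
import Mathlib

section
/- Let g : I → ℝ³ be a smooth unit speed space-like curve on H² (⟨g,g⟩ = −1, ⟨g',g'⟩ = 1). Let a > 0 and ξ₂ ∈ ℝ be constants with tanh(ξ₂) ≠ 0, assume tanh(ξ₂)·κ_g(v) < 1 for all v, and define γ(v) = a·∫₀ᵛ g(t)dt + a·tanh(ξ₂)·∫₀ᵛ g(t) × g'(t) dt. Then γ is a time-like Bertrand curve: γ' is everywhere time-like, and with A = a ≠ 0 and C = a·tanh(ξ₂) ≠ 0, the curvature κ and torsion τ of γ (given by κ = ‖γ' × γ''‖ / (−⟨γ', γ'⟩)^{3/2} and τ = det(γ', γ'', γ''') / ‖γ' × γ''‖²) satisfy A·κ(v) + C·τ(v) = 1 for all v ∈ I. -/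
noncomputable section

open Real
open scoped ContDiff

/-- The Lorentzian (Minkowski) inner product on ℝ³: ⟨x,y⟩ = x₁y₁ + x₂y₂ − x₃y₃. -/
def mink (x y : Fin 3 → ℝ) : ℝ := x 0 * y 0 + x 1 * y 1 - x 2 * y 2

/-- The Lorentzian cross product on ℝ³:
x × y = (x₂y₃ − x₃y₂, x₃y₁ − x₁y₃, x₂y₁ − x₁y₂). -/
def mcross (x y : Fin 3 → ℝ) : Fin 3 → ℝ :=
  ![x 1 * y 2 - x 2 * y 1, x 2 * y 0 - x 0 * y 2, x 1 * y 0 - x 0 * y 1]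

/-- Determinant of three vectors in ℝ³ (as the rows of a 3×3 matrix). -/
def mdet (x y z : Fin 3 → ℝ) : ℝ := Matrix.det (Matrix.of ![x, y, z])

/-- The pseudo norm ‖x‖ = √|⟨x,x⟩|. -/
def mnorm (x : Fin 3 → ℝ) : ℝ := Real.sqrt |mink x x|

/-! ### Auxiliary algebraic lemmas -/

lemma mdet_eq (x y z : Fin 3 → ℝ) : mdet x y z = mink (mcross x y) z := by
  simp [mdet, Matrix.det_fin_three, mink, mcross]; ring

lemma mink_comm (x y : Fin 3 → ℝ) : mink x y = mink y x := by simp [mink]; ring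

lemma mink_cross_left (x y : Fin 3 → ℝ) : mink x (mcross x y) = 0 := by
  simp [mink, mcross]; ring

lemma mink_cross_right (x y : Fin 3 → ℝ) : mink y (mcross x y) = 0 := by
  simp [mink, mcross]; ring

lemma mink_cross_sq (x y : Fin 3 → ℝ) :
    mink (mcross x y) (mcross x y) = (mink x y)^2 - mink x x * mink y y := by
  simp [mink, mcross]; ring

lemma mcross_cross_left (x y : Fin 3 → ℝ) :
    mcross x (mcross x y) = (mink x x) • y - (mink x y) • x := by
  funext i; fin_cases i <;> (simp [mink, mcross]; ring)

lemma mcross_cross_right (x y : Fin 3 → ℝ) :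
    mcross (mcross x y) y = (mink y y) • x - (mink x y) • y := by
  funext i; fin_cases i <;> (simp [mink, mcross]; ring)

lemma mink_add_left (x y z : Fin 3 → ℝ) : mink (x + y) z = mink x z + mink y z := by
  simp [mink]; ring

lemma mink_smul_left (c : ℝ) (x y : Fin 3 → ℝ) : mink (c • x) y = c * mink x y := by
  simp [mink]; ring

lemma mink_add_right (x y z : Fin 3 → ℝ) : mink x (y + z) = mink x y + mink x z := by
  simp [mink]; ring

lemma mink_smul_right (c : ℝ) (x y : Fin 3 → ℝ) : mink x (c • y) = c * mink x y := by
  simp [mink]; ring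

lemma mcross_self (x : Fin 3 → ℝ) : mcross x x = 0 := by
  funext i; fin_cases i <;> (simp [mcross]; ring)

lemma mcross_add_left (x y z : Fin 3 → ℝ) : mcross (x + y) z = mcross x z + mcross y z := by
  funext i; fin_cases i <;> (simp [mcross]; ring)

lemma mcross_add_right (x y z : Fin 3 → ℝ) : mcross x (y + z) = mcross x y + mcross x z := by
  funext i; fin_cases i <;> (simp [mcross]; ring)

lemma mcross_smul_left (c : ℝ) (x y : Fin 3 → ℝ) : mcross (c • x) y = c • mcross x y := by
  funext i; fin_cases i <;> (simp [mcross]; ring)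

lemma mcross_smul_right (c : ℝ) (x y : Fin 3 → ℝ) : mcross x (c • y) = c • mcross x y := by
  funext i; fin_cases i <;> (simp [mcross]; ring)

/-- Master lemma: expansion of the second derivative in the frame `u, w, u×w`. -/
lemma master_frame (u w z : Fin 3 → ℝ) (h1 : mink u u = -1) (h2 : mink w w = 1)
    (h3 : mink u w = 0) (h4 : mink u z = -1) (h5 : mink w z = 0) :
    z = u + (mink (mcross u w) z) • (mcross u w) := by
  simp only [mink] at h1 h2 h3 h4 h5
  funext i
  fin_cases i
  · simp [mink, mcross]
    linear_combination
      (((w 0*w 0+w 1*w 1-w 2*w 2) * z 0 - (w 0*z 0+w 1*z 1-w 2*z 2) * w 0) * h1 +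
       (-(z 0) - (u 0*z 0+u 1*z 1-u 2*z 2)*u 0) * h2 +
       (-(u 0*w 0+u 1*w 1-u 2*w 2)*z 0 + (w 0*z 0+w 1*z 1-w 2*z 2)*u 0 +
          (u 0*z 0+u 1*z 1-u 2*z 2)*w 0) * h3 +
       (-(u 0))*h4 + (w 0)*h5)
  · simp [mink, mcross]
    linear_combination
      (((w 0*w 0+w 1*w 1-w 2*w 2) * z 1 - (w 0*z 0+w 1*z 1-w 2*z 2) * w 1) * h1 +
       (-(z 1) - (u 0*z 0+u 1*z 1-u 2*z 2)*u 1) * h2 +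
       (-(u 0*w 0+u 1*w 1-u 2*w 2)*z 1 + (w 0*z 0+w 1*z 1-w 2*z 2)*u 1 +
          (u 0*z 0+u 1*z 1-u 2*z 2)*w 1) * h3 +
       (-(u 1))*h4 + (w 1)*h5)
  · simp [mink, mcross]
    linear_combination
      (((w 0*w 0+w 1*w 1-w 2*w 2) * z 2 - (w 0*z 0+w 1*z 1-w 2*z 2) * w 2) * h1 +
       (-(z 2) - (u 0*z 0+u 1*z 1-u 2*z 2)*u 2) * h2 +
       (-(u 0*w 0+u 1*w 1-u 2*w 2)*z 2 + (w 0*z 0+w 1*z 1-w 2*z 2)*u 2 +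
          (u 0*z 0+u 1*z 1-u 2*z 2)*w 2) * h3 +
       (-(u 2))*h4 + (w 2)*h5)

/-! ### Calculus helpers -/

lemma hasDerivAt_apply' {f : ℝ → Fin 3 → ℝ} {f' : Fin 3 → ℝ} {v : ℝ}
    (h : HasDerivAt f f' v) (i : Fin 3) : HasDerivAt (fun v => f v i) (f' i) v :=
  hasDerivAt_pi.mp h i

lemma hasDerivAt_mink {f₁ f₂ : ℝ → Fin 3 → ℝ} {f₁' f₂' : Fin 3 → ℝ} {v : ℝ}
    (h1 : HasDerivAt f₁ f₁' v) (h2 : HasDerivAt f₂ f₂' v) :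
    HasDerivAt (fun v => mink (f₁ v) (f₂ v)) (mink f₁' (f₂ v) + mink (f₁ v) f₂') v := by
  have H : ∀ i j : Fin 3, HasDerivAt (fun v => f₁ v i * f₂ v j)
      (f₁' i * f₂ v j + f₁ v i * f₂' j) v :=
    fun i j => (hasDerivAt_apply' h1 i).mul (hasDerivAt_apply' h2 j)
  have := ((H 0 0).add (H 1 1)).sub (H 2 2)
  convert (show HasDerivAt (fun v => mink (f₁ v) (f₂ v)) _ v from this) using 1
  simp [mink]; ring

lemma hasDerivAt_mcross {f₁ f₂ : ℝ → Fin 3 → ℝ} {f₁' f₂' : Fin 3 → ℝ} {v : ℝ}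
    (h1 : HasDerivAt f₁ f₁' v) (h2 : HasDerivAt f₂ f₂' v) :
    HasDerivAt (fun v => mcross (f₁ v) (f₂ v)) (mcross f₁' (f₂ v) + mcross (f₁ v) f₂') v := by
  have H : ∀ i j : Fin 3, HasDerivAt (fun v => f₁ v i * f₂ v j)
      (f₁' i * f₂ v j + f₁ v i * f₂' j) v :=
    fun i j => (hasDerivAt_apply' h1 i).mul (hasDerivAt_apply' h2 j)
  rw [hasDerivAt_pi]
  intro i
  fin_cases i
  · convert ((H 1 2).sub (H 2 1)) using 1 <;> (simp [mcross, Pi.sub_def] <;> ring)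
  · convert ((H 2 0).sub (H 0 2)) using 1 <;> (simp [mcross, Pi.sub_def] <;> ring)
  · convert ((H 1 0).sub (H 0 1)) using 1 <;> (simp [mcross, Pi.sub_def] <;> ring)

lemma tanh_sq_lt_one (ξ : ℝ) : Real.tanh ξ ^ 2 < 1 := by
  have hc := Real.cosh_pos ξ
  have hs := Real.cosh_sq_sub_sinh_sq ξ
  rw [Real.tanh_eq_sinh_div_cosh, div_pow, div_lt_one (by positivity)]
  nlinarith

set_option maxHeartbeats 2000000 in
theorem hyperbolic_gives_timelike_bertrand
    (a b : ℝ) (I : Set ℝ) (hI : I = Set.Ioo a b) (h0 : (0:ℝ) ∈ I)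
    (g : ℝ → Fin 3 → ℝ) (hg : ContDiff ℝ (⊤ : ℕ∞) g)
    (hg1 : ∀ v ∈ I, mink (g v) (g v) = -1)
    (hg2 : ∀ v ∈ I, mink (deriv g v) (deriv g v) = 1)
    (κg : ℝ → ℝ) (hκg : ∀ v, κg v = mdet (g v) (deriv g v) (deriv (deriv g) v))
    (A ξ : ℝ) (hA : 0 < A)
    (hξκ : ∀ v ∈ I, Real.tanh ξ * κg v < 1)
    (γ : ℝ → Fin 3 → ℝ)
    (hγ : ∀ v, γ v = A • (∫ w in (0:ℝ)..v, g w) +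
        (A * Real.tanh ξ) • (∫ w in (0:ℝ)..v, mcross (g w) (deriv g w)))
    (κ τ : ℝ → ℝ)
    (hκdef : ∀ v, κ v = mnorm (mcross (deriv γ v) (deriv (deriv γ) v)) /
        (-(mink (deriv γ v) (deriv γ v))) ^ (3/2 : ℝ))
    (hτdef : ∀ v, τ v =
        mdet (deriv γ v) (deriv (deriv γ) v) (deriv (deriv (deriv γ)) v) /
        (mnorm (mcross (deriv γ v) (deriv (deriv γ) v))) ^ 2)
    (hξ0 : Real.tanh ξ ≠ 0) :
    A ≠ 0 ∧ A * Real.tanh ξ ≠ 0 ∧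
      ∀ v ∈ I, mink (deriv γ v) (deriv γ v) < 0 ∧
        A * κ v + (A * Real.tanh ξ) * τ v = 1 := by
  subst hI
  set t : ℝ := Real.tanh ξ with htdef
  have ht1 : t ^ 2 < 1 := _root_.tanh_sq_lt_one ξ
  have hIopen : IsOpen (Set.Ioo a b) := isOpen_Ioo
  -- smoothness bookkeeping
  have hgi : ContDiff ℝ (∞ : WithTop ℕ∞) g := hg.of_le (by simp)
  have hgd : Differentiable ℝ g := hgi.differentiable (by simp)
  have hgi1 : ContDiff ℝ (∞ : WithTop ℕ∞) (deriv g) := (contDiff_infty_iff_deriv.mp hgi).2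
  have hg'd : Differentiable ℝ (deriv g) := hgi1.differentiable (by simp)
  have hgi2 : ContDiff ℝ (∞ : WithTop ℕ∞) (deriv (deriv g)) :=
    (contDiff_infty_iff_deriv.mp hgi1).2
  have hg''d : Differentiable ℝ (deriv (deriv g)) := hgi2.differentiable (by simp)
  -- first derivative of γ
  have hγfun : γ = fun v => A • (∫ w in (0:ℝ)..v, g w) +
      (A * t) • (∫ w in (0:ℝ)..v, mcross (g w) (deriv g w)) := funext hγ
  have hcont1 : Continuous g := hgd.continuous
  have hca : ∀ i : Fin 3, Continuous fun w => g w i :=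
    fun i => (continuous_apply i).comp hcont1
  have hcb : ∀ i : Fin 3, Continuous fun w => deriv g w i :=
    fun i => (continuous_apply i).comp (hgi1.continuous)
  have hcont2 : Continuous fun w => mcross (g w) (deriv g w) := by
    refine continuous_pi fun i => ?_
    fin_cases i
    · simpa [mcross] using (show Continuous fun w => g w 1 * deriv g w 2 - g w 2 * deriv g w 1 from ((hca 1).mul (hcb 2)).sub ((hca 2).mul (hcb 1)))
    · simpa [mcross] using (show Continuous fun w => g w 2 * deriv g w 0 - g w 0 * deriv g w 2 from ((hca 2).mul (hcb 0)).sub ((hca 0).mul (hcb 2)))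
    · simpa [mcross] using (show Continuous fun w => g w 1 * deriv g w 0 - g w 0 * deriv g w 1 from ((hca 1).mul (hcb 0)).sub ((hca 0).mul (hcb 1)))
  have hd1 : ∀ v, HasDerivAt γ (A • g v + (A * t) • mcross (g v) (deriv g v)) v := by
    intro v
    rw [hγfun]
    exact ((intervalIntegral.integral_hasDerivAt_right (hcont1.intervalIntegrable _ _)
        hcont1.stronglyMeasurable.stronglyMeasurableAtFilter hcont1.continuousAt).const_smul
        A).add
      ((intervalIntegral.integral_hasDerivAt_right (hcont2.intervalIntegrable _ _)
        hcont2.stronglyMeasurable.stronglyMeasurableAtFilter hcont2.continuousAt).const_smul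
        (A * t))
  have hγ' : deriv γ = fun v => A • g v + (A * t) • mcross (g v) (deriv g v) :=
    funext fun v => (hd1 v).deriv
  -- second derivative of γ
  have hd2 : ∀ v, HasDerivAt (deriv γ)
      (A • deriv g v + (A * t) • mcross (g v) (deriv (deriv g) v)) v := by
    intro v
    rw [hγ']
    have c1 : HasDerivAt (fun v => A • g v) (A • deriv g v) v :=
      (hgd v).hasDerivAt.const_smul A
    have c2 := hasDerivAt_mcross (hgd v).hasDerivAt (hg'd v).hasDerivAt
    have c3 := c1.add (c2.const_smul (A * t))
    simpa [mcross_self, smul_add] using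
      (show HasDerivAt (fun v => A • g v + (A * t) • mcross (g v) (deriv g v)) _ v from c3)
  have hγ'' : deriv (deriv γ) = fun v => A • deriv g v + (A * t) • mcross (g v) (deriv (deriv g) v) :=
    funext fun v => (hd2 v).deriv
  -- the scalar constraints on the open interval
  have huw : ∀ v ∈ Set.Ioo a b, mink (g v) (deriv g v) = 0 := by
    intro v hv
    have hev : (fun w => mink (g w) (g w)) =ᶠ[nhds v] (fun _ => (-1:ℝ)) :=
      Filter.eventuallyEq_of_mem (hIopen.mem_nhds hv) (fun w hw => hg1 w hw)
    have hD := hasDerivAt_mink (hgd v).hasDerivAt (hgd v).hasDerivAt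
    have h1 : deriv (fun w => mink (g w) (g w)) v = 0 := by
      rw [hev.deriv_eq]; simp
    have h2 := hD.deriv
    rw [h1] at h2
    have := mink_comm (deriv g v) (g v)
    linarith [h2, this]
  have hww' : ∀ v ∈ Set.Ioo a b, mink (deriv g v) (deriv (deriv g) v) = 0 := by
    intro v hv
    have hev : (fun w => mink (deriv g w) (deriv g w)) =ᶠ[nhds v] (fun _ => (1:ℝ)) :=
      Filter.eventuallyEq_of_mem (hIopen.mem_nhds hv) (fun w hw => hg2 w hw)
    have hD := hasDerivAt_mink (hg'd v).hasDerivAt (hg'd v).hasDerivAt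
    have h1 : deriv (fun w => mink (deriv g w) (deriv g w)) v = 0 := by
      rw [hev.deriv_eq]; simp
    have h2 := hD.deriv
    rw [h1] at h2
    have := mink_comm (deriv (deriv g) v) (deriv g v)
    linarith [h2, this]
  have hgg'' : ∀ v ∈ Set.Ioo a b, mink (g v) (deriv (deriv g) v) = -1 := by
    intro v hv
    have hev : (fun w => mink (g w) (deriv g w)) =ᶠ[nhds v] (fun _ => (0:ℝ)) :=
      Filter.eventuallyEq_of_mem (hIopen.mem_nhds hv) (fun w hw => huw w hw)
    have hD := hasDerivAt_mink (hgd v).hasDerivAt (hg'd v).hasDerivAt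
    have h1 : deriv (fun w => mink (g w) (deriv g w)) v = 0 := by
      rw [hev.deriv_eq]; simp
    have h2 := hD.deriv
    rw [h1] at h2
    have h3 := mink_comm (deriv g v) (deriv g v)
    have h4 := hg2 v hv
    linarith [h2]
  -- master frame expansion at points of the interval
  have hmaster : ∀ v ∈ Set.Ioo a b, deriv (deriv g) v = g v +
      (mink (mcross (g v) (deriv g v)) (deriv (deriv g) v)) • (mcross (g v) (deriv g v)) :=
    fun v hv => master_frame _ _ _ (hg1 v hv) (hg2 v hv) (huw v hv) (hgg'' v hv) (hww' v hv)
  have hκg' : ∀ v, κg v = mink (mcross (g v) (deriv g v)) (deriv (deriv g) v) := by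
    intro v; rw [hκg v, mdet_eq]
  -- second derivative simplification on the interval
  have hq : ∀ v ∈ Set.Ioo a b,
      deriv (deriv γ) v = (A * (1 - t * κg v)) • deriv g v := by
    intro v hv
    simp only [hγ'']
    have hz := hmaster v hv
    rw [hz, mcross_add_right, mcross_self, mcross_smul_right, mcross_cross_left,
      hg1 v hv, huw v hv]
    rw [← hκg' v]
    match_scalars <;> ring
  -- differentiability of κg
  have hκgd : ∀ v, HasDerivAt κg
      (mink (mcross (deriv g v) (deriv g v) + mcross (g v) (deriv (deriv g) v))
          (deriv (deriv g) v) +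
        mink (mcross (g v) (deriv g v)) (deriv (deriv (deriv g)) v)) v := by
    intro v
    have hfun : κg = fun v => mink (mcross (g v) (deriv g v)) (deriv (deriv g) v) :=
      funext hκg'
    rw [hfun]
    exact hasDerivAt_mink
      (hasDerivAt_mcross (hgd v).hasDerivAt (hg'd v).hasDerivAt)
      (hg''d v).hasDerivAt
  -- third derivative of γ on the interval
  have hr : ∀ v ∈ Set.Ioo a b, ∃ c : ℝ,
      deriv (deriv (deriv γ)) v =
        c • deriv g v + (A * (1 - t * κg v)) • deriv (deriv g) v := by
    intro v hv
    have hev : deriv (deriv γ) =ᶠ[nhds v] (fun w => (A * (1 - t * κg w)) • deriv g w) :=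
      Filter.eventuallyEq_of_mem (hIopen.mem_nhds hv) (fun w hw => hq w hw)
    set K : ℝ := mink (mcross (deriv g v) (deriv g v) + mcross (g v) (deriv (deriv g) v))
        (deriv (deriv g) v) +
      mink (mcross (g v) (deriv g v)) (deriv (deriv (deriv g)) v) with hK
    have hs : HasDerivAt (fun w => A * (1 - t * κg w)) (A * -(t * K)) v :=
      (((hκgd v).const_mul t).const_sub 1).const_mul A
    have hD := hs.smul (hg'd v).hasDerivAt
    refine ⟨A * -(t * K), ?_⟩
    rw [hev.deriv_eq, (show HasDerivAt (fun w => (A * (1 - t * κg w)) • deriv g w) _ v from hD).deriv]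
    abel
  -- now the pointwise conclusion
  refine ⟨hA.ne', mul_ne_zero hA.ne' hξ0, fun v hv => ?_⟩
  set u : Fin 3 → ℝ := g v with hu
  set w : Fin 3 → ℝ := deriv g v with hw
  set n : Fin 3 → ℝ := mcross u w with hn
  set k : ℝ := κg v with hk
  have huu : mink u u = -1 := hg1 v hv
  have hww : mink w w = 1 := hg2 v hv
  have huw0 : mink u w = 0 := huw v hv
  have hun : mink u n = 0 := mink_cross_left u w
  have hwn : mink w n = 0 := mink_cross_right u w
  have hnn : mink n n = 1 := by
    rw [hn, mink_cross_sq, huw0, huu, hww]; ring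
  have hnz : mink n (deriv (deriv g) v) = k := (hκg' v).symm
  have hp : deriv γ v = A • u + (A * t) • n := by simp only [hγ']; rfl
  have hqv : deriv (deriv γ) v = (A * (1 - t * k)) • w := hq v hv
  obtain ⟨c, hrv⟩ := hr v hv
  have hmk : 0 < 1 - t * k := by
    have := hξκ v hv; linarith
  -- the key scalar quantities
  have hpp : mink (deriv γ v) (deriv γ v) = A ^ 2 * (t ^ 2 - 1) := by
    rw [hp]
    simp only [mink_add_left, mink_add_right, mink_smul_left, mink_smul_right]
    rw [huu, hnn, mink_comm n u, hun]
    ring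
  have hcross : mcross (deriv γ v) (deriv (deriv γ) v) = (A ^ 2 * (1 - t * k)) • (n + t • u) := by
    rw [hp, hqv]
    simp only [mcross_add_left, mcross_smul_left, mcross_smul_right]
    rw [hn, mcross_cross_right, hww, huw0]
    match_scalars <;> ring
  have hcc : mink (mcross (deriv γ v) (deriv (deriv γ) v))
      (mcross (deriv γ v) (deriv (deriv γ) v)) = (A ^ 2 * (1 - t * k)) ^ 2 * (1 - t ^ 2) := by
    rw [hcross]
    simp only [mink_add_left, mink_add_right, mink_smul_left, mink_smul_right]
    rw [hnn, huu, mink_comm n u, hun]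
    ring
  have hs1 : (0:ℝ) < 1 - t ^ 2 := by linarith
  have hm : (0:ℝ) < A ^ 2 * (1 - t * k) := by positivity
  have hnorm : mnorm (mcross (deriv γ v) (deriv (deriv γ) v)) =
      (A ^ 2 * (1 - t * k)) * Real.sqrt (1 - t ^ 2) := by
    rw [mnorm, hcc, abs_of_nonneg (by positivity), Real.sqrt_mul (by positivity),
      Real.sqrt_sq hm.le]
  have hdet : mdet (deriv γ v) (deriv (deriv γ) v) (deriv (deriv (deriv γ)) v) =
      A ^ 3 * (1 - t * k) ^ 2 * (k - t) := by
    have hnw : mink n w = 0 := by rw [mink_comm]; exact hwn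
    have huz : mink u (deriv (deriv g) v) = -1 := hgg'' v hv
    rw [mdet_eq, hcross, hrv, ← hk]
    simp only [mink_add_left, mink_add_right, mink_smul_left, mink_smul_right]
    rw [← hw, hnw, huw0, hnz, huz]
    ring
  have htime : mink (deriv γ v) (deriv γ v) < 0 := by
    rw [hpp]
    have : t ^ 2 - 1 < 0 := by linarith
    nlinarith [sq_nonneg A, hA]
  refine ⟨htime, ?_⟩
  -- compute the rpow denominator
  have hXpos : (0:ℝ) < A ^ 2 * (1 - t ^ 2) := by positivity
  have hX32 : (-(mink (deriv γ v) (deriv γ v))) ^ (3/2 : ℝ) =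
      (A ^ 2 * (1 - t ^ 2)) * (A * Real.sqrt (1 - t ^ 2)) := by
    rw [hpp, show -(A ^ 2 * (t ^ 2 - 1)) = A ^ 2 * (1 - t ^ 2) by ring]
    rw [show (3/2 : ℝ) = 1 + 1/2 by norm_num, Real.rpow_add hXpos, Real.rpow_one,
      ← Real.sqrt_eq_rpow, Real.sqrt_mul (by positivity), Real.sqrt_sq hA.le]
  have hsq : Real.sqrt (1 - t ^ 2) ≠ 0 := by positivity
  rw [hκdef v, hτdef v, hnorm, hdet, hX32]
  have hsqpos : 0 < Real.sqrt (1 - t ^ 2) := Real.sqrt_pos.mpr hs1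
  have e0 : (A ^ 2 * (1 - t * k) * Real.sqrt (1 - t ^ 2)) ^ 2 =
      (A ^ 2 * (1 - t * k)) ^ 2 * (1 - t ^ 2) := by
    rw [mul_pow, Real.sq_sqrt hs1.le]
  rw [e0]
  have e1 : A ^ 2 * (1 - t * k) * Real.sqrt (1 - t ^ 2) /
      (A ^ 2 * (1 - t ^ 2) * (A * Real.sqrt (1 - t ^ 2))) = (1 - t * k) / (A * (1 - t ^ 2)) := by
    rw [div_eq_div_iff (by positivity) (by positivity)]
    ring
  have e2 : A ^ 3 * (1 - t * k) ^ 2 * (k - t) / ((A ^ 2 * (1 - t * k)) ^ 2 * (1 - t ^ 2)) =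
      (k - t) / (A * (1 - t ^ 2)) := by
    rw [div_eq_div_iff (by positivity) (by positivity)]
    ring
  rw [e1, e2]
  field_simp
  ring
end
end

section
/- Let g : I → ℝ³ be a smooth unit speed space-like curve on H² (⟨g,g⟩ = −1, ⟨g',g'⟩ = 1). Fix constants θ > 0 and u > 0, set ξ₂ = coth(θ)·ln(u) and a = u·sinh(θ)·cosh(ξ₂), and define the time-like Bertrand curve γ(v) = a·∫₀ᵛ g(t)dt + a·tanh(ξ₂)·∫₀ᵛ g(t) × g'(t) dt. Then for all v ∈ I, γ'(v) = u·sinh(θ)·(cosh(ξ₂)·g(v) + sinh(ξ₂)·(g(v) × g'(v))); that is, γ'(v) is the v-parameter curve of the space-like constant slope surface x(u,v) = u·sinh(θ)·(cosh(ξ₂)·g(v) + sinh(ξ₂)·g(v) × g'(v)) lying in the time-like cone, so γ' lies on this surface. -/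
noncomputable section

open Real

/-- with θ > 0, u > 0, ξ₂ = coth θ·ln u and a = u·sinh θ·cosh ξ₂, the
derivative of the time-like Bertrand curve γ(v) = a·∫₀ᵛ g + a·tanh ξ₂·∫₀ᵛ g × g'
is the v-parameter curve of the space-like constant slope surface
x(u,v) = u·sinh θ·(cosh ξ₂·g(v) + sinh ξ₂·g(v) × g'(v)) lying in the time-like
cone, i.e. γ'(v) = u·sinh θ·(cosh ξ₂·g(v) + sinh ξ₂·(g(v) × g'(v))). -/
theorem timelike_bertrand_derivative_on_constant_slope_surface
    (a b : ℝ) (I : Set ℝ) (hI : I = Set.Ioo a b) (h0 : (0:ℝ) ∈ I)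
    (g : ℝ → Fin 3 → ℝ) (hg : ContDiff ℝ (⊤ : ℕ∞) g)
    (hg1 : ∀ v ∈ I, mink (g v) (g v) = -1)
    (hg2 : ∀ v ∈ I, mink (deriv g v) (deriv g v) = 1)
    (θ u : ℝ) (hθ : 0 < θ) (hu : 0 < u)
    (ξ : ℝ) (hξ : ξ = (Real.cosh θ / Real.sinh θ) * Real.log u)
    (A : ℝ) (hA : A = u * Real.sinh θ * Real.cosh ξ)
    (γ : ℝ → Fin 3 → ℝ)
    (hγ : ∀ v, γ v = A • (∫ w in (0:ℝ)..v, g w) +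
        (A * Real.tanh ξ) • (∫ w in (0:ℝ)..v, mcross (g w) (deriv g w))) :
    ∀ v ∈ I,
      deriv γ v = (u * Real.sinh θ) •
        (Real.cosh ξ • g v + Real.sinh ξ • mcross (g v) (deriv g v)) := by
  intro v hv
  have hgc : Continuous g := hg.continuous
  have hg'c : Continuous (deriv g) := hg.continuous_deriv (by simp)
  have hmc : Continuous (fun w => mcross (g w) (deriv g w)) := by
    apply continuous_pi
    intro i
    fin_cases i <;> simp only [mcross, Matrix.cons_val_zero, Matrix.cons_val_one,
      Matrix.head_cons, Matrix.cons_val_two, Matrix.tail_cons] <;>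
    exact (((continuous_apply _).comp hgc).mul ((continuous_apply _).comp hg'c)).sub
      (((continuous_apply _).comp hgc).mul ((continuous_apply _).comp hg'c))
  have h1 : HasDerivAt (fun v => ∫ w in (0:ℝ)..v, g w) (g v) v :=
    (hgc.integral_hasStrictDerivAt 0 v).hasDerivAt
  have h2 : HasDerivAt (fun v => ∫ w in (0:ℝ)..v, mcross (g w) (deriv g w))
      (mcross (g v) (deriv g v)) v :=
    (hmc.integral_hasStrictDerivAt 0 v).hasDerivAt
  have hγeq : γ = fun v => A • (∫ w in (0:ℝ)..v, g w) +
      (A * Real.tanh ξ) • (∫ w in (0:ℝ)..v, mcross (g w) (deriv g w)) :=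
    funext hγ
  have hd : HasDerivAt γ (A • g v + (A * Real.tanh ξ) • mcross (g v) (deriv g v)) v := by
    rw [hγeq]
    exact (h1.const_smul A).add (h2.const_smul (A * Real.tanh ξ))
  rw [hd.deriv]
  have hcosh : Real.cosh ξ ≠ 0 := (Real.cosh_pos ξ).ne'
  have htanh : A * Real.tanh ξ = u * Real.sinh θ * Real.sinh ξ := by
    rw [hA, Real.tanh_eq_sinh_div_cosh]
    field_simp
  rw [htanh, hA, smul_add, smul_smul, smul_smul]
end
end
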